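/- Let d ∈ {1,2,3,7,11}. (i) For every z ∈ K_d with z ∉ ℚ(√−d), the convergents of the nearest-integer 𝔬_d-continued fraction expansion of z satisfy p_n/q_n → z as n → ∞. (ii) For every z ∈ K_d with z ∈ ℚ(√−d), the algorithm stops in a finite number of steps, i.e. there exists n ≥ 0 with G^n(z) = 0. -/

import Mathlib

open MeasureTheory Filter Topology

noncomputable section

/-- `ω` for the ring of integers of `ℚ(√-d)`. -/
def om (d : ℕ) : ℂ :=
  if d % 4 = 3 then (-1 + Complex.I * Real.sqrt d) / 2 else Complex.I * Real.sqrt d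

/-- The ring of integers `𝔬_d = ℤ[ω]` as a subset of `ℂ`. -/
def Od (d : ℕ) : Set ℂ := {z | ∃ n m : ℤ, z = (n : ℂ) + (m : ℂ) * om d}

/-- The field `ℚ(√-d)` as a subset of `ℂ`. -/
def Qd (d : ℕ) : Set ℂ := {z | ∃ a b : ℚ, z = (a : ℂ) + (b : ℂ) * om d}

/-- The open Dirichlet fundamental domain `K_d` centred at the origin. -/
def Kd (d : ℕ) : Set ℂ :=
  {z | ∀ lam ∈ Od d, lam ≠ 0 → ‖z‖ < ‖z - lam‖}

/-- The complex Gauss map associated with a nearest-integer map `fl`. -/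
def gauss (fl : ℂ → ℂ) (z : ℂ) : ℂ := if z = 0 then 0 else 1 / z - fl (1 / z)

/-- The `n`-th digit `a_n(z)` (for `n ≥ 1`) of the nearest-integer continued fraction. -/
def digit (fl : ℂ → ℂ) (n : ℕ) (z : ℂ) : ℂ := fl (1 / (gauss fl)^[n - 1] z)

/-- Auxiliary recursion producing `((p_{n-2}, q_{n-2}), (p_{n-1}, q_{n-1}))` at index `n`. -/
def convAux (a : ℕ → ℂ) : ℕ → (ℂ × ℂ) × (ℂ × ℂ)
  | 0 => ((0, 1), (1, 0))
  | n + 1 => ((convAux a n).2,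
      (a n * (convAux a n).2.1 + (convAux a n).1.1,
       a n * (convAux a n).2.2 + (convAux a n).1.2))

/-- The digit sequence of `z`, with `a_0 = 0`. -/
def aseq (fl : ℂ → ℂ) (z : ℂ) : ℕ → ℂ := fun k => if k = 0 then 0 else digit fl k z

/-- Numerator `p_n` of the `n`-th convergent of `z`. -/
def pconv (fl : ℂ → ℂ) (z : ℂ) (n : ℕ) : ℂ := (convAux (aseq fl z) (n + 1)).2.1

/-- Denominator `q_n` of the `n`-th convergent of `z`. -/
def qconv (fl : ℂ → ℂ) (z : ℂ) (n : ℕ) : ℂ := (convAux (aseq fl z) (n + 1)).2.2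

/-- `p_{n-1}` (so `pprev fl z 0 = p_{-1} = 1`). -/
def pprev (fl : ℂ → ℂ) (z : ℂ) (n : ℕ) : ℂ := (convAux (aseq fl z) (n + 1)).1.1

/-- `q_{n-1}` (so `qprev fl z 0 = q_{-1} = 0`). -/
def qprev (fl : ℂ → ℂ) (z : ℂ) (n : ℕ) : ℂ := (convAux (aseq fl z) (n + 1)).1.2

/-!
Every iterate `G^n(z)` lies in the closure of `K_d`, whose points have modulus at most
`ρ = √(9/11) < 1` (the vertices of the hexagon `K_11` attain it), while nonzero elements of `𝔬_d`
have modulus at least `√3/2`.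

(i) The error `q_n z - p_n` equals `(-1)^n ∏_{k ≤ n} G^k(z)`, so it is at most `ρ^(n+1)`.
Once this is below `√3/2`, `q_n ∈ 𝔬_d` cannot vanish, and `|p_n/q_n - z| ≤ ρ^(n+1) / (√3/2)`.

(ii) If `v ≠ 0` in `𝔬_d` clears the denominator of `w`, then `v * w` clears that of `G(w)`.
Starting from a denominator of `z ∈ ℚ(√-d)`, a nonterminating expansion would produce
nonzero elements of `𝔬_d` of modulus at most `ρ^n |v|`, which is impossible.
-/

open Complex ComplexConjugate

section Arithmetic

variable {d : ℕ}

lemma om_of_mod_four_eq_three (h : d % 4 = 3) : om d = ⟨-1 / 2, Real.sqrt d / 2⟩ := by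
  apply Complex.ext <;> simp [om, h]

lemma om_of_mod_four_ne_three (h : d % 4 ≠ 3) : om d = ⟨0, Real.sqrt d⟩ := by
  apply Complex.ext <;> simp [om, h]

lemma exists_conj_om_eq : ∃ t : ℤ, conj (om d) = t - om d := by
  by_cases h : d % 4 = 3
  · refine ⟨-1, Complex.ext ?_ ?_⟩ <;> simp [om_of_mod_four_eq_three h]; norm_num
  · refine ⟨0, Complex.ext ?_ ?_⟩ <;> simp [om_of_mod_four_ne_three h]

lemma exists_om_mul_conj_eq : ∃ N : ℤ, om d * conj (om d) = N := by
  suffices ∃ N : ℤ, normSq (om d) = N by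
    obtain ⟨N, hN⟩ := this
    exact ⟨N, by rw [mul_conj, hN, ofReal_intCast]⟩
  have hs : Real.sqrt d ^ 2 = d := Real.sq_sqrt (Nat.cast_nonneg d)
  by_cases h : d % 4 = 3
  · have hd : (d : ℝ) = 4 * (d / 4 : ℕ) + 3 := by exact_mod_cast (by omega : d = 4 * (d / 4) + 3)
    refine ⟨(d / 4 + 1 : ℕ), ?_⟩
    rw [om_of_mod_four_eq_three h, normSq_mk, Int.cast_natCast]
    push_cast
    linear_combination (1 / 4 : ℝ) * hs + (1 / 4 : ℝ) * hd
  · refine ⟨d, ?_⟩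
    rw [om_of_mod_four_ne_three h, normSq_mk]
    push_cast
    linear_combination hs

lemma exists_om_sq_eq : ∃ t N : ℤ, om d ^ 2 = t * om d - N := by
  obtain ⟨t, ht⟩ := exists_conj_om_eq (d := d)
  obtain ⟨N, hN⟩ := exists_om_mul_conj_eq (d := d)
  exact ⟨t, N, by linear_combination om d * ht - hN⟩

lemma om_mem_Od : om d ∈ Od d := ⟨0, 1, by simp⟩

end Arithmetic

def Od.subring (d : ℕ) : Subring ℂ where
  carrier := Od d
  zero_mem' := ⟨0, 0, by simp⟩
  one_mem' := ⟨1, 0, by simp⟩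
  add_mem' := by
    rintro _ _ ⟨n, m, rfl⟩ ⟨n', m', rfl⟩
    exact ⟨n + n', m + m', by push_cast; ring⟩
  neg_mem' := by
    rintro _ ⟨n, m, rfl⟩
    exact ⟨-n, -m, by push_cast; ring⟩
  mul_mem' := by
    obtain ⟨t, N, h⟩ := exists_om_sq_eq (d := d)
    rintro _ _ ⟨n, m, rfl⟩ ⟨n', m', rfl⟩
    exact ⟨n * n' - m * m' * N, n * m' + m * n' + m * m' * t, by
      push_cast; linear_combination (m * m' : ℂ) * h⟩

section Field

variable {d : ℕ} {x y : ℂ}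

lemma zero_mem_Qd : (0 : ℂ) ∈ Qd d := ⟨0, 0, by simp⟩

lemma mem_Qd_of_mem_Od (hx : x ∈ Od d) : x ∈ Qd d := by
  obtain ⟨n, m, rfl⟩ := hx
  exact ⟨n, m, by push_cast; rfl⟩

lemma add_mem_Qd (hx : x ∈ Qd d) (hy : y ∈ Qd d) : x + y ∈ Qd d := by
  obtain ⟨a, b, rfl⟩ := hx
  obtain ⟨a', b', rfl⟩ := hy
  exact ⟨a + a', b + b', by push_cast; ring⟩

/-- `x⁻¹ = conj x / (x * conj x)`, and `x * conj x` is rational. -/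
lemma inv_mem_Qd (hx : x ∈ Qd d) : x⁻¹ ∈ Qd d := by
  rcases eq_or_ne x 0 with rfl | hx0
  · simpa using zero_mem_Qd
  obtain ⟨t, ht⟩ := exists_conj_om_eq (d := d)
  obtain ⟨N, hN⟩ := exists_om_mul_conj_eq (d := d)
  obtain ⟨a, b, rfl⟩ := hx
  set r : ℚ := a ^ 2 + a * b * t + b ^ 2 * N
  have hr : ((a : ℂ) + b * om d) * conj ((a : ℂ) + b * om d) = r := by
    simp only [map_add, map_mul, map_ratCast, r]
    push_cast
    linear_combination (a * b : ℂ) * ht + (b : ℂ) ^ 2 * hN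
  have hr0 : (r : ℂ) ≠ 0 := by
    rw [← hr]; exact mul_ne_zero hx0 ((map_ne_zero _).2 hx0)
  refine ⟨(a + b * t) / r, -b / r, inv_eq_of_mul_eq_one_right ?_⟩
  have hinv : (((a + b * t) / r : ℚ) : ℂ) + ((-b / r : ℚ) : ℂ) * om d
      = conj ((a : ℂ) + b * om d) / r := by
    simp only [map_add, map_mul, map_ratCast, ht]
    push_cast
    ring
  rw [hinv, mul_div_assoc', hr, div_self hr0]

end Field

section Geometry

variable {d : ℕ} {z : ℂ}

lemma three_quarters_le_om_im_sq (hd : 0 < d) : 3 / 4 ≤ (om d).im ^ 2 := by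
  have hs : Real.sqrt d ^ 2 = d := Real.sq_sqrt (Nat.cast_nonneg d)
  by_cases h : d % 4 = 3
  · have : (3 : ℝ) ≤ d := by exact_mod_cast (by omega : 3 ≤ d)
    rw [om_of_mod_four_eq_three h]
    nlinarith
  · have : (1 : ℝ) ≤ d := by exact_mod_cast hd
    rw [om_of_mod_four_ne_three h]
    nlinarith

lemma three_quarters_le_normSq_of_mem_Od (hd : 0 < d) {lam : ℂ} (hl : lam ∈ Od d)
    (h0 : lam ≠ 0) : 3 / 4 ≤ normSq lam := by
  obtain ⟨n, m, rfl⟩ := hl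
  rw [normSq_apply]
  simp only [add_re, add_im, intCast_re, intCast_im, mul_re, mul_im, zero_mul, sub_zero,
    add_zero, zero_add]
  rcases eq_or_ne m 0 with rfl | hm
  · have hn : n ≠ 0 := by rintro rfl; simp at h0
    have : (1 : ℝ) ≤ n ^ 2 := mod_cast (one_le_sq_iff_one_le_abs _).mpr (Int.one_le_abs hn)
    simp only [Int.cast_zero, zero_mul, add_zero]
    nlinarith
  · have : (1 : ℝ) ≤ m ^ 2 := mod_cast (one_le_sq_iff_one_le_abs _).mpr (Int.one_le_abs hm)
    nlinarith [three_quarters_le_om_im_sq hd, sq_nonneg (n + m * (om d).re)]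

lemma sqrt_three_quarters_le_norm_of_mem_Od (hd : 0 < d) {lam : ℂ} (hl : lam ∈ Od d)
    (h0 : lam ≠ 0) : Real.sqrt (3 / 4) ≤ ‖lam‖ :=
  (norm_def lam).symm ▸ Real.sqrt_le_sqrt (three_quarters_le_normSq_of_mem_Od hd hl h0)

lemma zero_mem_Kd : (0 : ℂ) ∈ Kd d := fun _ _ h0 => by simpa using h0

lemma om_ne_zero (hd : 0 < d) : om d ≠ 0 := fun h0 => by
  have := three_quarters_le_om_im_sq hd
  rw [h0, zero_im] at this
  norm_num at this

lemma abs_two_mul_re_add_im_le_of_mem_Kd (hz : z ∈ Kd d) {lam : ℂ} (hl : lam ∈ Od d)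
    (h0 : lam ≠ 0) : |2 * (lam.re * z.re + lam.im * z.im)| ≤ lam.re ^ 2 + lam.im ^ 2 := by
  have key : ∀ μ ∈ Od d, μ ≠ 0 → 2 * (μ.re * z.re + μ.im * z.im) ≤ μ.re ^ 2 + μ.im ^ 2 := by
    intro μ hμ hμ0
    have h : normSq z ≤ normSq (z - μ) := by
      rw [normSq_eq_norm_sq, normSq_eq_norm_sq]
      exact pow_le_pow_left₀ (norm_nonneg z) (hz μ hμ hμ0).le 2
    simp only [normSq_apply, sub_re, sub_im] at h
    nlinarith
  have hneg := key (-lam) ((Od.subring d).neg_mem hl) (neg_ne_zero.2 h0)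
  simp only [neg_re, neg_im, neg_sq] at hneg
  exact abs_le.2 ⟨by linarith, key lam hl h0⟩

lemma normSq_le_of_mem_Kd_of_mod_four_ne_three (hd : 0 < d) (h : d % 4 ≠ 3)
    (hz : z ∈ Kd d) : normSq z ≤ (1 + d) / 4 := by
  have hs : Real.sqrt d ^ 2 = d := Real.sq_sqrt (Nat.cast_nonneg d)
  have hs0 : 0 < Real.sqrt d := Real.sqrt_pos.2 (by exact_mod_cast hd)
  have hone := abs_two_mul_re_add_im_le_of_mem_Kd hz (Od.subring d).one_mem one_ne_zero
  have hom := abs_two_mul_re_add_im_le_of_mem_Kd hz om_mem_Od (om_ne_zero hd)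
  simp only [one_re, one_im, om_of_mod_four_ne_three h] at hone hom
  obtain ⟨hone, hone'⟩ := abs_le.1 hone
  obtain ⟨hom, hom'⟩ := abs_le.1 hom
  have hx : z.re ^ 2 ≤ 1 / 4 := by nlinarith
  have hy : z.im ^ 2 ≤ d / 4 := by
    have : |z.im| ≤ Real.sqrt d / 2 := abs_le.2 ⟨by nlinarith, by nlinarith⟩
    nlinarith [sq_abs z.im, abs_nonneg z.im]
  rw [normSq_apply]
  nlinarith

lemma normSq_le_of_mem_Kd_of_mod_four_eq_three (h : d % 4 = 3) (hz : z ∈ Kd d) :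
    normSq z ≤ (1 + d) ^ 2 / (16 * d) := by
  have hs : Real.sqrt d ^ 2 = d := Real.sq_sqrt (Nat.cast_nonneg d)
  have hd : (0 : ℝ) < d := by exact_mod_cast (by omega : 0 < d)
  have hom1 : 1 + om d ≠ 0 := fun h0 => by
    have := congrArg im h0
    simp only [add_im, one_im, zero_im, zero_add, om_of_mod_four_eq_three h] at this
    linarith [Real.sqrt_pos.2 hd]
  have hone := abs_two_mul_re_add_im_le_of_mem_Kd hz (Od.subring d).one_mem one_ne_zero
  have hom := abs_two_mul_re_add_im_le_of_mem_Kd hz om_mem_Od (om_ne_zero (by omega))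
  have hom1 := abs_two_mul_re_add_im_le_of_mem_Kd hz
    ((Od.subring d).add_mem (Od.subring d).one_mem om_mem_Od) hom1
  simp only [add_re, add_im, one_re, one_im, om_of_mod_four_eq_three h] at hone hom hom1
  set s := Real.sqrt d
  obtain ⟨hone, hone'⟩ := abs_le.1 hone
  obtain ⟨hom, hom'⟩ := abs_le.1 hom
  obtain ⟨hom1, hom1'⟩ := abs_le.1 hom1
  ring_nf at hone hone' hom hom' hom1 hom1'
  have hx : |z.re| ≤ 1 / 2 := abs_le.2 ⟨by linarith, by linarith⟩
  have hy : |s * z.im| ≤ (1 + s ^ 2) / 4 - |z.re| := by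
    rcases abs_cases z.re with ⟨hre, _⟩ | ⟨hre, _⟩ <;> rw [hre] <;>
      exact abs_le.2 ⟨by linarith, by linarith⟩
  have h1 : (s * z.im) ^ 2 ≤ ((1 + s ^ 2) / 4 - |z.re|) ^ 2 := by
    rw [← sq_abs (s * z.im)]
    exact pow_le_pow_left₀ (abs_nonneg _) hy 2
  have h2 : 0 ≤ |z.re| * ((1 + s ^ 2) * (1 / 2 - |z.re|)) :=
    mul_nonneg (abs_nonneg _) (mul_nonneg (by positivity) (by linarith))
  rw [le_div_iff₀ (by positivity), ← hs, normSq_apply]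
  nlinarith [sq_abs z.re]

lemma normSq_le_of_mem_Kd (hd : d = 1 ∨ d = 2 ∨ d = 3 ∨ d = 7 ∨ d = 11)
    (hz : z ∈ Kd d) : normSq z ≤ 9 / 11 := by
  rcases hd with rfl | rfl | rfl | rfl | rfl
  · linarith [normSq_le_of_mem_Kd_of_mod_four_ne_three (by norm_num) (by norm_num) hz]
  · linarith [normSq_le_of_mem_Kd_of_mod_four_ne_three (by norm_num) (by norm_num) hz]
  all_goals
    refine (normSq_le_of_mem_Kd_of_mod_four_eq_three (by norm_num) hz).trans ?_
    norm_num

lemma norm_le_of_mem_closure_Kd (hd : d = 1 ∨ d = 2 ∨ d = 3 ∨ d = 7 ∨ d = 11) {w : ℂ}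
    (hw : w ∈ closure (Kd d)) : ‖w‖ ≤ Real.sqrt (9 / 11) := by
  have hK : Kd d ⊆ Metric.closedBall 0 (Real.sqrt (9 / 11)) := fun u hu => by
    rw [mem_closedBall_zero_iff, norm_def]
    exact Real.sqrt_le_sqrt (normSq_le_of_mem_Kd hd hu)
  simpa using closure_minimal hK Metric.isClosed_closedBall hw

end Geometry

section GaussMap

variable {d : ℕ} {fl : ℂ → ℂ} {z : ℂ}

lemma gauss_mem_closure_Kd (hfl_near : ∀ w : ℂ, w - fl w ∈ closure (Kd d)) (w : ℂ) :
    gauss fl w ∈ closure (Kd d) := by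
  unfold gauss
  split_ifs
  · exact subset_closure zero_mem_Kd
  · exact hfl_near _

lemma iterate_gauss_mem_closure_Kd (hfl_near : ∀ w : ℂ, w - fl w ∈ closure (Kd d))
    (hz : z ∈ closure (Kd d)) : ∀ n, (gauss fl)^[n] z ∈ closure (Kd d)
  | 0 => hz
  | n + 1 => by
    rw [Function.iterate_succ_apply']
    exact gauss_mem_closure_Kd hfl_near _

lemma mem_Qd_of_gauss_mem_Qd (hfl_mem : ∀ w : ℂ, fl w ∈ Od d) (h : gauss fl z ∈ Qd d) :
    z ∈ Qd d := by
  rcases eq_or_ne z 0 with rfl | hz0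
  · exact zero_mem_Qd
  rw [gauss, if_neg hz0] at h
  have hinv : 1 / z ∈ Qd d := by
    simpa using add_mem_Qd h (mem_Qd_of_mem_Od (hfl_mem (1 / z)))
  simpa using inv_mem_Qd hinv

lemma iterate_gauss_ne_zero_of_notMem_Qd (hfl_mem : ∀ w : ℂ, fl w ∈ Od d) (hz : z ∉ Qd d)
    (n : ℕ) : (gauss fl)^[n] z ≠ 0 := by
  induction n generalizing z with
  | zero => exact fun h : z = 0 => hz (h ▸ zero_mem_Qd)
  | succ n ih =>
    rw [Function.iterate_succ_apply]
    exact ih fun h => hz (mem_Qd_of_gauss_mem_Qd hfl_mem h)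

lemma mul_mul_gauss_mem_Od (hfl_mem : ∀ w : ℂ, fl w ∈ Od d) {v w : ℂ} (hv : v ∈ Od d)
    (hvw : v * w ∈ Od d) : v * w * gauss fl w ∈ Od d := by
  rcases eq_or_ne w 0 with rfl | hw0
  · rw [mul_zero, zero_mul]
    exact (Od.subring d).zero_mem
  have : v * w * gauss fl w = v - v * w * fl (1 / w) := by
    rw [gauss, if_neg hw0]
    field_simp
  rw [this]
  exact (Od.subring d).sub_mem hv ((Od.subring d).mul_mem hvw (hfl_mem _))

lemma exists_mul_mem_Od_of_mem_Qd (hz : z ∈ Qd d) : ∃ v ∈ Od d, v ≠ 0 ∧ v * z ∈ Od d := by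
  obtain ⟨a, b, rfl⟩ := hz
  refine ⟨(a.den * b.den : ℤ), ⟨a.den * b.den, 0, by simp⟩, by simp, ?_⟩
  refine ⟨a.num * b.den, b.num * a.den, ?_⟩
  rw [Rat.cast_def a, Rat.cast_def b]
  push_cast
  field_simp

end GaussMap

lemma convAux_mem (S : Subring ℂ) {a : ℕ → ℂ} (ha : ∀ k, a k ∈ S) (n : ℕ) :
    ((convAux a n).1.1 ∈ S ∧ (convAux a n).1.2 ∈ S) ∧
      (convAux a n).2.1 ∈ S ∧ (convAux a n).2.2 ∈ S := by
  induction n with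
  | zero => exact ⟨⟨S.zero_mem, S.one_mem⟩, S.one_mem, S.zero_mem⟩
  | succ n ih =>
    obtain ⟨⟨h1, h2⟩, h3, h4⟩ := ih
    exact ⟨⟨h3, h4⟩, S.add_mem (S.mul_mem (ha n) h3) h1, S.add_mem (S.mul_mem (ha n) h4) h2⟩

section Convergents

variable {d : ℕ} {fl : ℂ → ℂ} {z : ℂ}

@[simp] lemma pconv_zero : pconv fl z 0 = 0 := by simp [pconv, convAux, aseq]
@[simp] lemma qconv_zero : qconv fl z 0 = 1 := by simp [qconv, convAux, aseq]
@[simp] lemma pprev_zero : pprev fl z 0 = 1 := rfl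
@[simp] lemma qprev_zero : qprev fl z 0 = 0 := rfl

lemma pconv_succ (n : ℕ) :
    pconv fl z (n + 1) = fl (1 / (gauss fl)^[n] z) * pconv fl z n + pprev fl z n := rfl
lemma qconv_succ (n : ℕ) :
    qconv fl z (n + 1) = fl (1 / (gauss fl)^[n] z) * qconv fl z n + qprev fl z n := rfl
lemma pprev_succ (n : ℕ) : pprev fl z (n + 1) = pconv fl z n := rfl
lemma qprev_succ (n : ℕ) : qprev fl z (n + 1) = qconv fl z n := rfl

lemma aseq_mem_Od (hfl_mem : ∀ w : ℂ, fl w ∈ Od d) (k : ℕ) : aseq fl z k ∈ Od d := by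
  unfold aseq
  split_ifs
  · exact (Od.subring d).zero_mem
  · exact hfl_mem _

lemma pconv_mem_Od (hfl_mem : ∀ w : ℂ, fl w ∈ Od d) (n : ℕ) : pconv fl z n ∈ Od d :=
  (convAux_mem (Od.subring d) (aseq_mem_Od hfl_mem) (n + 1)).2.1

lemma qconv_mem_Od (hfl_mem : ∀ w : ℂ, fl w ∈ Od d) (n : ℕ) : qconv fl z n ∈ Od d :=
  (convAux_mem (Od.subring d) (aseq_mem_Od hfl_mem) (n + 1)).2.2

lemma qconv_mul_sub_pconv_eq (hnz : ∀ n, (gauss fl)^[n] z ≠ 0) (n : ℕ) :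
    qconv fl z n * z - pconv fl z n
      = -(gauss fl)^[n] z * (qprev fl z n * z - pprev fl z n) := by
  induction n with
  | zero => simp
  | succ n ih =>
    rw [pconv_succ, qconv_succ, pprev_succ, qprev_succ, Function.iterate_succ_apply', gauss,
      if_neg (hnz n)]
    field_simp [hnz n]
    linear_combination ih

lemma qconv_mul_sub_pconv_succ (hnz : ∀ n, (gauss fl)^[n] z ≠ 0) (n : ℕ) :
    qconv fl z (n + 1) * z - pconv fl z (n + 1)
      = -(gauss fl)^[n + 1] z * (qconv fl z n * z - pconv fl z n) :=
  qconv_mul_sub_pconv_eq hnz (n + 1)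

lemma qconv_mul_sub_pconv_ne_zero (hnz : ∀ n, (gauss fl)^[n] z ≠ 0) (n : ℕ) :
    qconv fl z n * z - pconv fl z n ≠ 0 := by
  induction n with
  | zero => simpa using hnz 0
  | succ n ih =>
    rw [qconv_mul_sub_pconv_succ hnz]
    exact mul_ne_zero (neg_ne_zero.2 (hnz _)) ih

lemma norm_qconv_mul_sub_pconv_le {ρ : ℝ} (hnz : ∀ n, (gauss fl)^[n] z ≠ 0)
    (hρ : ∀ n, ‖(gauss fl)^[n] z‖ ≤ ρ) (n : ℕ) :
    ‖qconv fl z n * z - pconv fl z n‖ ≤ ρ ^ (n + 1) := by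
  induction n with
  | zero => simpa using hρ 0
  | succ n ih =>
    rw [qconv_mul_sub_pconv_succ hnz, norm_mul, norm_neg, pow_succ']
    exact mul_le_mul (hρ _) ih (norm_nonneg _) ((norm_nonneg _).trans (hρ 0))

end Convergents

section Main

variable {d : ℕ} {fl : ℂ → ℂ} {z : ℂ} {ρ c : ℝ}

theorem tendsto_pconv_div_qconv (hfl_mem : ∀ w : ℂ, fl w ∈ Od d) (hc : 0 < c)
    (hmin : ∀ lam ∈ Od d, lam ≠ 0 → c ≤ ‖lam‖) (hρ1 : ρ < 1)
    (hρ : ∀ n, ‖(gauss fl)^[n] z‖ ≤ ρ) (hnz : ∀ n, (gauss fl)^[n] z ≠ 0) :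
    Tendsto (fun n => pconv fl z n / qconv fl z n) atTop (𝓝 z) := by
  have hρ0 : 0 ≤ ρ := (norm_nonneg _).trans (hρ 0)
  have hpow : Tendsto (fun n : ℕ => ρ ^ (n + 1)) atTop (𝓝 0) :=
    (tendsto_pow_atTop_nhds_zero_of_lt_one hρ0 hρ1).comp (tendsto_add_atTop_nat 1)
  rw [tendsto_iff_dist_tendsto_zero]
  refine squeeze_zero' (.of_forall fun _ => dist_nonneg) ?_ (by simpa using hpow.div_const c)
  filter_upwards [hpow.eventually_lt_const hc] with n hn
  have herr := norm_qconv_mul_sub_pconv_le hnz hρ n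
  have hq0 : qconv fl z n ≠ 0 := by
    intro hq0
    have hp0 : pconv fl z n ≠ 0 := fun hp0 =>
      qconv_mul_sub_pconv_ne_zero hnz n (by rw [hq0, hp0]; ring)
    rw [hq0, zero_mul, zero_sub, norm_neg] at herr
    linarith [hmin _ (pconv_mem_Od hfl_mem n) hp0]
  calc dist (pconv fl z n / qconv fl z n) z
      = ‖qconv fl z n * z - pconv fl z n‖ / ‖qconv fl z n‖ := by
        rw [dist_eq, div_sub' hq0, norm_div, ← norm_neg, neg_sub]
    _ ≤ ρ ^ (n + 1) / c :=
        div_le_div₀ (by positivity) herr hc (hmin _ (qconv_mem_Od hfl_mem n) hq0)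

theorem exists_iterate_gauss_eq_zero_of_mem_Qd (hfl_mem : ∀ w : ℂ, fl w ∈ Od d) (hc : 0 < c)
    (hmin : ∀ lam ∈ Od d, lam ≠ 0 → c ≤ ‖lam‖) (hρ1 : ρ < 1)
    (hρ : ∀ n, ‖(gauss fl)^[n] z‖ ≤ ρ) (hz : z ∈ Qd d) : ∃ n, (gauss fl)^[n] z = 0 := by
  by_contra! hnz
  have hρ0 : 0 ≤ ρ := (norm_nonneg _).trans (hρ 0)
  obtain ⟨v, hv, hv0, hvz⟩ := exists_mul_mem_Od_of_mem_Qd hz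
  have hdesc : ∀ n, ∃ u ∈ Od d, u ≠ 0 ∧ u * (gauss fl)^[n] z ∈ Od d ∧ ‖u‖ ≤ ρ ^ n * ‖v‖ := by
    intro n
    induction n with
    | zero => exact ⟨v, hv, hv0, hvz, by simp⟩
    | succ n ih =>
      obtain ⟨u, hu, hu0, huz, hle⟩ := ih
      refine ⟨u * (gauss fl)^[n] z, huz, mul_ne_zero hu0 (hnz n), ?_, ?_⟩
      · rw [Function.iterate_succ_apply']
        exact mul_mul_gauss_mem_Od hfl_mem hu huz
      · rw [norm_mul, pow_succ]
        calc ‖u‖ * ‖(gauss fl)^[n] z‖ ≤ ρ ^ n * ‖v‖ * ρ :=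
              mul_le_mul hle (hρ n) (norm_nonneg _) (by positivity)
          _ = ρ ^ n * ρ * ‖v‖ := by ring
  obtain ⟨N, hN⟩ := exists_pow_lt_of_lt_one (div_pos hc (norm_pos_iff.2 hv0)) hρ1
  obtain ⟨u, hu, hu0, -, hle⟩ := hdesc N
  rw [lt_div_iff₀ (norm_pos_iff.2 hv0)] at hN
  linarith [hmin u hu hu0]

end Main

theorem convergents_converge_and_rationals_terminate_general
    (d : ℕ) (hd : d = 1 ∨ d = 2 ∨ d = 3 ∨ d = 7 ∨ d = 11)
    (fl : ℂ → ℂ)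
    (hfl_mem : ∀ z : ℂ, fl z ∈ Od d)
    (hfl_near : ∀ z : ℂ, z - fl z ∈ closure (Kd d))
    (z : ℂ) (hz : z ∈ Kd d) :
    (z ∉ Qd d →
      Tendsto (fun n : ℕ => pconv fl z n / qconv fl z n) atTop (𝓝 z)) ∧
    (z ∈ Qd d → ∃ n : ℕ, (gauss fl)^[n] z = 0) := by
  have hd0 : 0 < d := by omega
  have hc : (0 : ℝ) < Real.sqrt (3 / 4) := by positivity
  have hmin : ∀ lam ∈ Od d, lam ≠ 0 → Real.sqrt (3 / 4) ≤ ‖lam‖ :=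
    fun _ hl h0 => sqrt_three_quarters_le_norm_of_mem_Od hd0 hl h0
  have hρ1 : Real.sqrt (9 / 11) < 1 := by rw [Real.sqrt_lt' one_pos]; norm_num
  have hρ : ∀ n, ‖(gauss fl)^[n] z‖ ≤ Real.sqrt (9 / 11) := fun n =>
    norm_le_of_mem_closure_Kd hd (iterate_gauss_mem_closure_Kd hfl_near (subset_closure hz) n)
  exact ⟨fun hirr => tendsto_pconv_div_qconv hfl_mem hc hmin hρ1 hρ
      (iterate_gauss_ne_zero_of_notMem_Qd hfl_mem hirr),
    exists_iterate_gauss_eq_zero_of_mem_Qd hfl_mem hc hmin hρ1 hρ⟩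

/-- (i) for irrational `z ∈ K_d` the convergents `p_n/q_n`
converge to `z`; (ii) for `z ∈ K_d ∩ ℚ(√-d)` the algorithm stops in finitely
many steps. -/
theorem convergents_converge_and_rationals_terminate
    (d : ℕ) (hd : d = 1 ∨ d = 2 ∨ d = 3 ∨ d = 7 ∨ d = 11)
    (fl : ℂ → ℂ) (hfl_meas : Measurable fl)
    (hfl_mem : ∀ z : ℂ, fl z ∈ Od d)
    (hfl_near : ∀ z : ℂ, z - fl z ∈ closure (Kd d))
    (z : ℂ) (hz : z ∈ Kd d) :
    (z ∉ Qd d →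
      Tendsto (fun n : ℕ => pconv fl z n / qconv fl z n) atTop (𝓝 z)) ∧
    (z ∈ Qd d → ∃ n : ℕ, (gauss fl)^[n] z = 0) :=
  convergents_converge_and_rationals_terminate_general d hd fl hfl_mem hfl_near z hz
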